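/- arXiv:0704.3873 — 6 statements merged into one kernel-verified Lean document; each statement's English description precedes it below -/
import Mathlib

section
/- Let 0 < a < b and let r_1, r_2 be distinct positive reals, and set r = r_2 - r_1. Then \int_a^b \frac{\ln x}{(x+r_1)(x+r_2)} dx = \frac{1}{r}\left[\ln b \, \ln\left(\frac{r_2(b+r_1)}{r_1(b+r_2)}\right) + \ln a \, \ln\left(\frac{r_1(a+r_2)}{r_2(a+r_1)}\right)\right] + \frac{1}{r}\left[\mathrm{Li}_2\left(-\frac{b}{r_1}\right) - \mathrm{Li}_2\left(-\frac{a}{r_1}\right) - \mathrm{Li}_2\left(-\frac{b}{r_2}\right) + \mathrm{Li}_2\left(-\frac{a}{r_2}\right)\right]. -/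
/-!
Partial fractions turn the integrand into `(log x / (x + r₁) - log x / (x + r₂)) / (r₂ - r₁)`.
Since `Li₂(-y)' = -log (1 + y) / y`, the function `log x * log (1 + x / r) + Li₂(-x / r)` is a
primitive of `log x / (x + r)` on `(0, ∞)`, and the theorem follows by the fundamental theorem of
calculus after expanding the logarithms.
-/

open Real MeasureTheory intervalIntegral Set

/-- The dilogarithm evaluated at `-y`: `Li₂(-y) = -∫₀^y log(1+t)/t dt`. -/
noncomputable def Li2neg (y : ℝ) : ℝ := -∫ t in (0:ℝ)..y, Real.log (1 + t) / t

lemma intervalIntegrable_log_one_add_div_self {y : ℝ} (hy : 0 ≤ y) :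
    IntervalIntegrable (fun t => log (1 + t) / t) volume 0 y := by
  refine (intervalIntegrable_const (c := (1 : ℝ))).mono_fun'
    (by fun_prop : Measurable fun t => log (1 + t) / t).aestronglyMeasurable ?_
  rw [uIoc_of_le hy]
  filter_upwards [ae_restrict_mem measurableSet_Ioc] with t ⟨ht, _⟩
  rw [norm_of_nonneg (div_nonneg (log_nonneg (by linarith)) ht.le), div_le_one ht]
  linarith [log_le_sub_one_of_pos (by linarith : 0 < 1 + t)]

lemma hasDerivAt_Li2neg {y : ℝ} (hy : 0 < y) :
    HasDerivAt Li2neg (-(log (1 + y) / y)) y := by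
  have hmeas : Measurable fun t => log (1 + t) / t := by fun_prop
  refine (integral_hasDerivAt_right (intervalIntegrable_log_one_add_div_self hy.le)
    hmeas.stronglyMeasurable.stronglyMeasurableAtFilter ?_).neg
  exact ((continuousAt_log (by linarith)).comp (by fun_prop)).div continuousAt_id hy.ne'

noncomputable def logDivAddPrimitive (r x : ℝ) : ℝ :=
  log x * log (1 + x / r) + Li2neg (x / r)

lemma hasDerivAt_logDivAddPrimitive {r x : ℝ} (hr : 0 < r) (hx : 0 < x) :
    HasDerivAt (logDivAddPrimitive r) (log x / (x + r)) x := by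
  have hdiv : HasDerivAt (fun x => x / r) (1 / r) x := by
    simpa using (hasDerivAt_id x).div_const r
  have hlog_one_add : HasDerivAt (fun x => log (1 + x / r)) ((1 + x / r)⁻¹ * (1 / r)) x :=
    (hasDerivAt_log (by positivity)).comp x (hdiv.const_add 1)
  have hLi2 : HasDerivAt (fun x => Li2neg (x / r)) (-(log (1 + x / r) / (x / r)) * (1 / r)) x :=
    (hasDerivAt_Li2neg (by positivity)).comp x hdiv
  refine (((hasDerivAt_log hx.ne').mul hlog_one_add).add hLi2).congr_deriv ?_
  field_simp
  ring

lemma continuousOn_log_div_add {a b r : ℝ} (ha : 0 < a) (hb : 0 < b) (hr : 0 ≤ r) :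
    ContinuousOn (fun x => log x / (x + r)) (uIcc a b) := by
  intro x hx
  have hx0 : 0 < x := (lt_min ha hb).trans_le hx.1
  exact ((continuousAt_log hx0.ne').div (by fun_prop) (by positivity)).continuousWithinAt

lemma integral_log_div_add {a b r : ℝ} (ha : 0 < a) (hb : 0 < b) (hr : 0 < r) :
    ∫ x in a..b, log x / (x + r) = logDivAddPrimitive r b - logDivAddPrimitive r a :=
  integral_eq_sub_of_hasDerivAt
    (fun _ hx => hasDerivAt_logDivAddPrimitive hr ((lt_min ha hb).trans_le hx.1))
    ((continuousOn_log_div_add ha hb hr.le).intervalIntegrable)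

lemma log_one_add_div {x r : ℝ} (hx : 0 < x) (hr : 0 < r) :
    log (1 + x / r) = log (x + r) - log r := by
  rw [← log_div (by positivity) hr.ne', add_div, div_self hr.ne', add_comm]

lemma log_mul_add_div_mul_add {x s t : ℝ} (hx : 0 < x) (hs : 0 < s) (ht : 0 < t) :
    log (s * (x + t) / (t * (x + s))) = log s + log (x + t) - (log t + log (x + s)) := by
  rw [log_div (by positivity) (by positivity), log_mul hs.ne' (by positivity),
    log_mul ht.ne' (by positivity)]

theorem integral_log_div_two_linear (a b r₁ r₂ : ℝ) (ha : 0 < a) (hab : a < b)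
    (hr₁ : 0 < r₁) (hr₂ : 0 < r₂) (hne : r₁ ≠ r₂) :
    ∫ x in a..b, Real.log x / ((x + r₁) * (x + r₂)) =
      (1 / (r₂ - r₁)) *
        (Real.log b * Real.log (r₂ * (b + r₁) / (r₁ * (b + r₂))) +
          Real.log a * Real.log (r₁ * (a + r₂) / (r₂ * (a + r₁)))) +
      (1 / (r₂ - r₁)) *
        (Li2neg (b / r₁) - Li2neg (a / r₁) - Li2neg (b / r₂) + Li2neg (a / r₂)) := by
  have hb : 0 < b := ha.trans hab
  have hr : r₂ - r₁ ≠ 0 := sub_ne_zero_of_ne hne.symm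
  have partial_fractions : ∀ x ∈ uIcc a b, log x / ((x + r₁) * (x + r₂)) =
      1 / (r₂ - r₁) * (log x / (x + r₁) - log x / (x + r₂)) := by
    intro x hx
    have hx0 : 0 < x := (lt_min ha hb).trans_le hx.1
    have h₁ : x + r₁ ≠ 0 := by positivity
    have h₂ : x + r₂ ≠ 0 := by positivity
    field_simp
    ring
  rw [integral_congr partial_fractions, intervalIntegral.integral_const_mul,
    integral_sub ((continuousOn_log_div_add ha hb hr₁.le).intervalIntegrable)
      ((continuousOn_log_div_add ha hb hr₂.le).intervalIntegrable),
    integral_log_div_add ha hb hr₁, integral_log_div_add ha hb hr₂]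
  simp only [logDivAddPrimitive]
  rw [log_one_add_div hb hr₁, log_one_add_div hb hr₂, log_one_add_div ha hr₁,
    log_one_add_div ha hr₂, log_mul_add_div_mul_add hb hr₂ hr₁,
    log_mul_add_div_mul_add ha hr₁ hr₂]
  ring
end

section
/- Let u and v be distinct positive reals. Then the improper integral \int_0^\infty \frac{\ln x}{(x+u)(x+v)} dx equals \frac{(\ln u)^2 - (\ln v)^2}{2(u-v)}. -/
/-!
The substitution `x ↦ u v / x` preserves the measure `dx / ((x + u) (x + v))` on `(0, ∞)` and
turns `log x` into `log (u v) - log x`. Hence twice the integral equals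
`log (u v) · ∫ dx / ((x + u) (x + v)) = (log u + log v) (log u - log v) / (u - v)`.
-/

open Real MeasureTheory Set Filter Topology

theorem integral_Ioi_comp_div {E : Type*} [NormedAddCommGroup E] [NormedSpace ℝ E]
    (g : ℝ → E) {c : ℝ} (hc : 0 < c) :
    ∫ x in Ioi 0, (c / x ^ 2) • g (c / x) = ∫ x in Ioi 0, g x := by
  calc ∫ x in Ioi 0, (c / x ^ 2) • g (c / x)
      = c • ∫ x in Ioi 0, (|(-1 : ℝ)| * x ^ ((-1 : ℝ) - 1)) • g (c * x ^ (-1 : ℝ)) := by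
        rw [← integral_smul]
        refine setIntegral_congr_fun measurableSet_Ioi fun x (hx : 0 < x) => ?_
        rw [smul_smul, rpow_neg_one, show (-1 : ℝ) - 1 = -2 by norm_num, rpow_neg hx.le,
          rpow_two]
        simp [div_eq_mul_inv]
    _ = c • ∫ y in Ioi 0, g (c * y) := by
        rw [integral_comp_rpow_Ioi (fun y => g (c * y)) (by norm_num)]
    _ = ∫ x in Ioi 0, g x := by rw [integral_comp_mul_left_Ioi' g 0 hc, mul_zero]

theorem tendsto_log_add_sub_log_add_atTop (u v : ℝ) :
    Tendsto (fun x => log (x + u) - log (x + v)) atTop (𝓝 0) := by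
  simpa using (tendsto_log_comp_add_sub_log u).sub (tendsto_log_comp_add_sub_log v)

section

variable {u v : ℝ}

theorem hasDerivAt_log_add_sub_log_add_div {x : ℝ} (hu : 0 < x + u) (hv : 0 < x + v)
    (huv : u ≠ v) :
    HasDerivAt (fun y => (log (y + v) - log (y + u)) / (u - v)) ((x + u) * (x + v))⁻¹ x := by
  have hlog_add {w : ℝ} (hw : 0 < x + w) : HasDerivAt (fun y => log (y + w)) (x + w)⁻¹ x :=
    ((hasDerivAt_id x).add_const w).log hw.ne' |>.congr_deriv (one_div _)
  refine ((hlog_add hv).sub (hlog_add hu)).div_const (u - v) |>.congr_deriv ?_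
  have : u - v ≠ 0 := sub_ne_zero.mpr huv
  field_simp
  ring

theorem integrableOn_Ioi_inv_mul_add (hu : 0 < u) (hv : 0 < v) (huv : u ≠ v) :
    IntegrableOn (fun x => ((x + u) * (x + v))⁻¹) (Ioi 0) :=
  integrableOn_Ioi_deriv_of_nonneg'
    (fun x (hx : 0 ≤ x) => hasDerivAt_log_add_sub_log_add_div (by linarith) (by linarith) huv)
    (fun x (hx : 0 < x) => by positivity)
    (by simpa using (tendsto_log_add_sub_log_add_atTop v u).div_const (u - v))

theorem integral_Ioi_inv_mul_add (hu : 0 < u) (hv : 0 < v) (huv : u ≠ v) :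
    ∫ x in Ioi 0, ((x + u) * (x + v))⁻¹ = (log u - log v) / (u - v) := by
  rw [integral_Ioi_of_hasDerivAt_of_nonneg'
    (fun x (hx : 0 ≤ x) => hasDerivAt_log_add_sub_log_add_div (by linarith) (by linarith) huv)
    (fun x (hx : 0 < x) => by positivity)
    (by simpa using (tendsto_log_add_sub_log_add_atTop v u).div_const (u - v))]
  rw [zero_add, zero_add, zero_sub, ← neg_div, neg_sub]

theorem integrableOn_Ioc_log_div_mul_add (hu : 0 < u) (hv : 0 < v) :
    IntegrableOn (fun x => log x / ((x + u) * (x + v))) (Ioc 0 1) := by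
  have hlog : IntegrableOn log (Ioc 0 1) :=
    (intervalIntegrable_iff_integrableOn_Ioc_of_le zero_le_one).mp
      intervalIntegral.intervalIntegrable_log'
  have hcont : ContinuousOn (fun x : ℝ => ((x + u) * (x + v))⁻¹) (Icc 0 1) :=
    ContinuousOn.inv₀ (by fun_prop) fun x (hx : x ∈ Icc 0 1) => by have := hx.1; positivity
  simpa only [div_eq_mul_inv] using
    hlog.mul_continuousOn_of_subset hcont measurableSet_Ioc isCompact_Icc Ioc_subset_Icc_self

theorem integrableOn_Ioi_one_log_div_mul_add (hu : 0 ≤ u) (hv : 0 ≤ v) :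
    IntegrableOn (fun x => log x / ((x + u) * (x + v))) (Ioi 1) := by
  refine ((integrableOn_Ioi_rpow_of_lt (a := -3 / 2) (by norm_num) one_pos).const_mul 2).mono'
    (measurable_log.div (by fun_prop)).aestronglyMeasurable
    ((ae_restrict_iff' measurableSet_Ioi).mpr (ae_of_all _ fun x (hx : 1 < x) => ?_))
  have hx0 : 0 < x := one_pos.trans hx
  rw [norm_of_nonneg (div_nonneg (log_nonneg hx.le) (by positivity))]
  calc log x / ((x + u) * (x + v))
      ≤ x ^ (1 / 2 : ℝ) / (1 / 2) / x ^ 2 :=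
        div_le_div₀ (by positivity) (log_le_rpow_div hx0.le (by norm_num)) (by positivity)
          (by nlinarith)
    _ = 2 * x ^ (-3 / 2 : ℝ) := by
        rw [show (-3 / 2 : ℝ) = 1 / 2 - 2 by norm_num, rpow_sub hx0, rpow_two]
        ring

theorem integrableOn_Ioi_log_div_mul_add (hu : 0 < u) (hv : 0 < v) :
    IntegrableOn (fun x => log x / ((x + u) * (x + v))) (Ioi 0) := by
  rw [← Ioc_union_Ioi_eq_Ioi zero_le_one]
  exact (integrableOn_Ioc_log_div_mul_add hu hv).union
    (integrableOn_Ioi_one_log_div_mul_add hu.le hv.le)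

theorem log_div_mul_add_comp_div (hu : 0 < u) (hv : 0 < v) {x : ℝ} (hx : 0 < x) :
    (u * v / x ^ 2) • (log (u * v / x) / ((u * v / x + u) * (u * v / x + v))) =
      (log (u * v) - log x) / ((x + u) * (x + v)) := by
  rw [smul_eq_mul, log_div (by positivity) hx.ne']
  field_simp
  ring

end

theorem integral_log_div_two_linear_Ioi (u v : ℝ) (hu : 0 < u) (hv : 0 < v) (huv : u ≠ v) :
    ∫ x in Set.Ioi (0:ℝ), Real.log x / ((x + u) * (x + v)) =
      ((Real.log u) ^ 2 - (Real.log v) ^ 2) / (2 * (u - v)) := by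
  have hsymm : ∫ x in Ioi 0, log x / ((x + u) * (x + v)) =
      ∫ x in Ioi 0, (log (u * v) - log x) / ((x + u) * (x + v)) :=
    (integral_Ioi_comp_div _ (mul_pos hu hv)).symm.trans
      (setIntegral_congr_fun measurableSet_Ioi fun x hx => log_div_mul_add_comp_div hu hv hx)
  have hsplit : ∫ x in Ioi 0, (log (u * v) - log x) / ((x + u) * (x + v)) =
      log (u * v) * (∫ x in Ioi 0, ((x + u) * (x + v))⁻¹) -
        ∫ x in Ioi 0, log x / ((x + u) * (x + v)) := by
    rw [← integral_const_mul,
      ← integral_sub ((integrableOn_Ioi_inv_mul_add hu hv huv).const_mul _)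
        (integrableOn_Ioi_log_div_mul_add hu hv)]
    congr 1
    ext x
    ring
  rw [hsplit, integral_Ioi_inv_mul_add hu hv huv, log_mul hu.ne' hv.ne'] at hsymm
  generalize ∫ x in Ioi 0, log x / ((x + u) * (x + v)) = I at hsymm ⊢
  have : u - v ≠ 0 := sub_ne_zero.mpr huv
  field_simp at hsymm ⊢
  linear_combination hsymm
end

section
/- Let 0 < a < b. Then \int_a^b \frac{\ln x}{(x+a)(x+b)} dx = \frac{\ln(ab)}{2(b-a)} \, \ln\left(\frac{(a+b)^2}{4ab}\right). -/
open Real Set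

/-!
The substitution `x ↦ a b / x` maps `[a, b]` onto itself and leaves the measure
`dx / ((x + a) (x + b))` invariant, while it sends `log x` to `log (a b) - log x`. Hence the
integral `I` satisfies `2 I = log (a b) · ∫_a^b dx / ((x + a) (x + b))`, and the last integral is
elementary by partial fractions.
-/

theorem mapsTo_mul_div_Icc {a b : ℝ} (ha : 0 < a) :
    MapsTo (fun x => a * b / x) (Icc a b) (Icc a b) := by
  rintro x ⟨hax, hxb⟩
  have hx : 0 < x := ha.trans_le hax
  constructor
  · rw [le_div_iff₀ hx]; nlinarith
  · rw [div_le_iff₀ hx]; nlinarith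

theorem intervalIntegral.integral_comp_mul_div_mul_div_sq {a b : ℝ} {f : ℝ → ℝ} (ha : 0 < a)
    (hab : a ≤ b) (hf : ContinuousOn f (Icc a b)) :
    ∫ x in a..b, f (a * b / x) * (a * b / x ^ 2) = ∫ x in a..b, f x := by
  have hpos : ∀ x ∈ uIcc a b, 0 < x := fun x hx => ha.trans_le (uIcc_of_le hab ▸ hx).1
  have hderiv : ∀ x ∈ uIcc a b, HasDerivAt (fun x => a * b / x) (-(a * b / x ^ 2)) x := by
    intro x hx
    simpa [div_eq_mul_inv, neg_div] using (hasDerivAt_inv (hpos x hx).ne').const_mul (a * b)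
  have hcont : ContinuousOn (fun x => -(a * b / x ^ 2)) (uIcc a b) :=
    (continuousOn_const.div (continuousOn_pow 2) fun x hx => pow_ne_zero 2 (hpos x hx).ne').neg
  have hsub := intervalIntegral.integral_comp_mul_deriv' hderiv hcont
    (hf.mono (by rw [uIcc_of_le hab]; exact (mapsTo_mul_div_Icc ha).image_subset))
  rw [mul_div_cancel_left₀ b ha.ne', mul_div_cancel_right₀ a (ha.trans_le hab).ne',
    intervalIntegral.integral_symm (f := f) a b] at hsub
  simpa [Function.comp_def, mul_neg, intervalIntegral.integral_neg] using hsub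

theorem one_div_mul_div_comp_mul_div {a b x : ℝ} (ha : a ≠ 0) (hb : b ≠ 0) (hx : x ≠ 0) :
    1 / ((a * b / x + a) * (a * b / x + b)) * (a * b / x ^ 2) = 1 / ((x + a) * (x + b)) := by
  have : (a * b / x + a) * (a * b / x + b) = a * b / x ^ 2 * ((x + a) * (x + b)) := by
    field_simp; ring
  rw [this, one_div_mul_eq_div, div_mul_cancel_left₀ (by positivity), one_div]

theorem intervalIntegral.integral_comp_mul_div_div_add_mul_add {a b : ℝ} {g : ℝ → ℝ}
    (ha : 0 < a) (hab : a ≤ b) (hg : ContinuousOn g (Icc a b)) :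
    ∫ x in a..b, g (a * b / x) / ((x + a) * (x + b)) =
      ∫ x in a..b, g x / ((x + a) * (x + b)) := by
  have hb : 0 < b := ha.trans_le hab
  have hpos : ∀ x ∈ Icc a b, 0 < x := fun x hx => ha.trans_le hx.1
  have hgW : ContinuousOn (fun x => g x / ((x + a) * (x + b))) (Icc a b) :=
    hg.div (by fun_prop) fun x hx => by have := hpos x hx; positivity
  rw [← intervalIntegral.integral_comp_mul_div_mul_div_sq ha hab hgW]
  refine intervalIntegral.integral_congr fun x hx => ?_
  rw [uIcc_of_le hab] at hx
  simp only [div_eq_mul_one_div (g _), mul_assoc,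
    one_div_mul_div_comp_mul_div ha.ne' hb.ne' (hpos x hx).ne']

theorem intervalIntegral.integral_one_div_add_mul_add {a b c d : ℝ} (hab : a ≤ b)
    (hac : 0 < a + c) (had : 0 < a + d) (hcd : c ≠ d) :
    ∫ x in a..b, 1 / ((x + c) * (x + d)) =
      (log ((b + c) / (a + c)) - log ((b + d) / (a + d))) / (d - c) := by
  have hxc : ∀ x ∈ uIcc a b, x + c ≠ 0 := fun x hx => by
    have := (uIcc_of_le hab ▸ hx).1; linarith
  have hxd : ∀ x ∈ uIcc a b, x + d ≠ 0 := fun x hx => by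
    have := (uIcc_of_le hab ▸ hx).1; linarith
  have hdc : d - c ≠ 0 := sub_ne_zero.mpr hcd.symm
  have hderiv : ∀ x ∈ uIcc a b, HasDerivAt (fun x => (log (x + c) - log (x + d)) / (d - c))
      (1 / ((x + c) * (x + d))) x := by
    intro x hx
    have h : HasDerivAt (fun x => (log (x + c) - log (x + d)) / (d - c))
        ((1 / (x + c) - 1 / (x + d)) / (d - c)) x :=
      ((((hasDerivAt_id' x).add_const c).log (hxc x hx)).sub
        (((hasDerivAt_id' x).add_const d).log (hxd x hx))).div_const (d - c)
    have := hxc x hx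
    have := hxd x hx
    exact h.congr_deriv (by field_simp; ring)
  have hint : IntervalIntegrable (fun x => 1 / ((x + c) * (x + d))) MeasureTheory.volume a b :=
    (continuousOn_const.div (by fun_prop) fun x hx =>
      mul_ne_zero (hxc x hx) (hxd x hx)).intervalIntegrable
  rw [intervalIntegral.integral_eq_sub_of_hasDerivAt hderiv hint,
    log_div (hxc b right_mem_uIcc) (hxc a left_mem_uIcc),
    log_div (hxd b right_mem_uIcc) (hxd a left_mem_uIcc)]
  ring

theorem intervalIntegral.integral_one_div_add_self_mul_add_self {a b : ℝ} (ha : 0 < a)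
    (hab : a < b) :
    ∫ x in a..b, 1 / ((x + a) * (x + b)) = log ((a + b) ^ 2 / (4 * (a * b))) / (b - a) := by
  have hb : 0 < b := ha.trans hab
  rw [intervalIntegral.integral_one_div_add_mul_add hab.le (by linarith) (by linarith) hab.ne,
    ← log_div (by positivity) (by positivity)]
  congr 2
  field_simp
  ring

theorem integral_log_div_shifted_elementary (a b : ℝ) (ha : 0 < a) (hab : a < b) :
    ∫ x in a..b, Real.log x / ((x + a) * (x + b)) =
      Real.log (a * b) / (2 * (b - a)) * Real.log ((a + b) ^ 2 / (4 * (a * b))) := by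
  have hb : 0 < b := ha.trans hab
  have hpos : ∀ x ∈ Icc a b, 0 < x := fun x hx => ha.trans_le hx.1
  have hW : ∀ x ∈ Icc a b, (x + a) * (x + b) ≠ 0 := fun x hx => by
    have := hpos x hx; positivity
  have hlog : ContinuousOn log (Icc a b) := continuousOn_log.mono fun x hx => (hpos x hx).ne'
  have hf : ContinuousOn (fun x => log x / ((x + a) * (x + b))) (Icc a b) :=
    hlog.div (by fun_prop) hW
  have hw : ContinuousOn (fun x => 1 / ((x + a) * (x + b))) (Icc a b) :=
    continuousOn_const.div (by fun_prop) hW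
  have hsymm : ∫ x in a..b, log x / ((x + a) * (x + b)) =
      log (a * b) * (∫ x in a..b, 1 / ((x + a) * (x + b))) -
        ∫ x in a..b, log x / ((x + a) * (x + b)) := calc
    _ = ∫ x in a..b, log (a * b / x) / ((x + a) * (x + b)) :=
      (intervalIntegral.integral_comp_mul_div_div_add_mul_add ha hab.le hlog).symm
    _ = ∫ x in a..b, (log (a * b) * (1 / ((x + a) * (x + b))) - log x / ((x + a) * (x + b))) :=
      intervalIntegral.integral_congr fun x hx => by
        rw [log_div (by positivity) (hpos x (uIcc_of_le hab.le ▸ hx)).ne']; ring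
    _ = _ := by
      rw [intervalIntegral.integral_sub ((hw.intervalIntegrable_of_Icc hab.le).const_mul _)
        (hf.intervalIntegrable_of_Icc hab.le), intervalIntegral.integral_const_mul]
  rw [intervalIntegral.integral_one_div_add_self_mul_add_self ha hab] at hsymm
  rw [mul_comm 2, ← div_div]
  linear_combination hsymm / 2
end

section
/- For every integer n \ge 3 and every real b > 0, h_n(b) = \frac{n-2}{n-1} h_{n-1}(b) + \frac{b \ln b}{(n-1)(1+b)^{n-1}} + \frac{1 - (1+b)^{n-2}}{(n-1)(n-2)(1+b)^{n-2}}. -/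
/-!
With m = n - 2, the weight (m + 1)/(1 + t)^(m + 2) - m/(1 + t)^(m + 1) = (1 - m t)/(1 + t)^(m + 2)
is the derivative of t/(1 + t)^(m + 1), so integrating by parts against log t gives the explicit
primitive Φ(t) = t log t/(1 + t)^(m + 1) + 1/(m (1 + t)^m). Because t log t → 0, Φ is continuous
at 0 and the fundamental theorem of calculus applies on all of [0, b] despite the singularity of
log there; evaluating Φ(b) - Φ(0) is the recurrence.
-/

open Real

/-- `h n b = ∫₀^b log t / (1+t)^n dt`. -/
noncomputable def h (n : ℕ) (b : ℝ) : ℝ := ∫ t in (0:ℝ)..b, Real.log t / (1 + t) ^ n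

open Set intervalIntegral
open scoped Interval

lemma one_add_pos_of_mem_uIcc {b t : ℝ} (hb : -1 < b) (ht : t ∈ [[0, b]]) : 0 < 1 + t := by
  have : -1 < t := (lt_min (by norm_num) hb).trans_le ht.1
  linarith

lemma intervalIntegrable_log_div_one_add_pow {b : ℝ} (hb : -1 < b) (n : ℕ) :
    IntervalIntegrable (fun t => log t / (1 + t) ^ n) MeasureTheory.volume 0 b := by
  simp_rw [div_eq_mul_inv]
  refine intervalIntegrable_log'.mul_continuousOn (ContinuousOn.inv₀ (by fun_prop) ?_)
  exact fun t ht => pow_ne_zero _ (one_add_pos_of_mem_uIcc hb ht).ne'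

lemma hasDerivAt_mul_log_div_one_add_pow {m : ℕ} (hm : m ≠ 0) {x : ℝ} (hx : x ≠ 0)
    (hx1 : 1 + x ≠ 0) :
    HasDerivAt (fun t => t * log t / (1 + t) ^ (m + 1) + 1 / (m * (1 + t) ^ m))
      ((m + 1) * (log x / (1 + x) ^ (m + 2)) - m * (log x / (1 + x) ^ (m + 1))) x := by
  have hone : HasDerivAt (fun t : ℝ => 1 + t) 1 x := (hasDerivAt_id x).const_add 1
  have hm' : (m : ℝ) ≠ 0 := Nat.cast_ne_zero.mpr hm
  have := (((hasDerivAt_id' x).fun_mul (hasDerivAt_log hx)).fun_div (hone.fun_pow (m + 1))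
    (pow_ne_zero _ hx1)).fun_add ((((hone.fun_pow m).const_mul (m : ℝ)).fun_inv
      (mul_ne_zero hm' (pow_ne_zero _ hx1))).const_mul 1)
  refine this.congr_deriv ?_
  obtain ⟨k, rfl⟩ : ∃ k, m = k + 1 := ⟨m - 1, by omega⟩
  simp only [Nat.add_sub_cancel]
  field_simp
  push_cast
  ring

lemma add_one_mul_h_add_two_sub_mul_h_add_one {m : ℕ} (hm : m ≠ 0) {b : ℝ} (hb : -1 < b) :
    (m + 1) * h (m + 2) b - m * h (m + 1) b =
      b * log b / (1 + b) ^ (m + 1) + 1 / (m * (1 + b) ^ m) - 1 / m := by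
  have hint := fun n => intervalIntegrable_log_div_one_add_pow hb n
  rw [h, h, ← integral_const_mul, ← integral_const_mul,
    ← integral_sub ((hint _).const_mul _) ((hint _).const_mul _),
    integral_eq_sub_of_hasDeriv_right
      (f := fun t => t * log t / (1 + t) ^ (m + 1) + 1 / (m * (1 + t) ^ m))]
  · simp
  · refine (continuous_mul_log.continuousOn.div (by fun_prop) fun t ht => ?_).add
      (continuousOn_const.div (by fun_prop) fun t ht => ?_)
    · exact pow_ne_zero _ (one_add_pos_of_mem_uIcc hb ht).ne'
    · exact mul_ne_zero (Nat.cast_ne_zero.mpr hm)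
        (pow_ne_zero _ (one_add_pos_of_mem_uIcc hb ht).ne')
  · intro x hx
    have hx0 : x ≠ 0 := by
      rintro rfl
      simp only [mem_Ioo, min_lt_iff, lt_max_iff, lt_self_iff_false, false_or] at hx
      exact lt_asymm hx.1 hx.2
    exact (hasDerivAt_mul_log_div_one_add_pow hm hx0
      (one_add_pos_of_mem_uIcc hb (Ioo_subset_Icc_self hx)).ne').hasDerivWithinAt
  · exact ((hint _).const_mul _).sub ((hint _).const_mul _)

theorem h_recurrence (n : ℕ) (hn : 3 ≤ n) (b : ℝ) (hb : 0 < b) :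
    h n b = ((n : ℝ) - 2) / ((n : ℝ) - 1) * h (n - 1) b +
      b * Real.log b / (((n : ℝ) - 1) * (1 + b) ^ (n - 1)) +
      (1 - (1 + b) ^ (n - 2)) / (((n : ℝ) - 1) * ((n : ℝ) - 2) * (1 + b) ^ (n - 2)) := by
  obtain ⟨m, rfl⟩ : ∃ m, n = m + 2 := ⟨n - 2, by omega⟩
  have hm : m ≠ 0 := by omega
  have key := add_one_mul_h_add_two_sub_mul_h_add_one hm (by linarith : -1 < b)
  have hm' : (m : ℝ) ≠ 0 := Nat.cast_ne_zero.mpr hm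
  have hb' : 1 + b ≠ 0 := by positivity
  have hcast₁ : ((m + 2 : ℕ) : ℝ) - 1 = m + 1 := by push_cast; ring
  have hcast₂ : ((m + 2 : ℕ) : ℝ) - 2 = m := by push_cast; ring
  rw [show m + 2 - 1 = m + 1 by omega, Nat.add_sub_cancel, hcast₁, hcast₂]
  have hm1 : (m : ℝ) + 1 ≠ 0 := by positivity
  field_simp at key ⊢
  linear_combination key
end

section
/- Define a sequence of polynomials S_n(x) (with real coefficients) for integers n \ge 2 by S_2(x) = 0 and the recurrence S_n(x) = (n-2) x S_{n-1}(x) + (n-3)! \sum_{r=0}^{n-3} x^r for n \ge 3. Then for every integer n \ge 3, the coefficient sequence c_{k,n} of S_n(x) = \sum_{k=0}^{n-3} c_{k,n} x^k is nondecreasing in k: c_{k,n} \le c_{k+1,n} for 0 \le k \le n-4. -/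
/-! Comparing the recurrence coefficientwise, `c_{k+1,n+1} - c_{k,n+1} = (n-1)(c_{k,n} - c_{k-1,n})`
for `k ≥ 1`, because the factorial contributions cancel, while `c_{1,n+1} - c_{0,n+1} = (n-1) c_{0,n}`
with `c_{0,n} = (n-3)! ≥ 0`. Induction on `n` finishes the proof. -/

open Polynomial

namespace Polynomial

variable {R : Type*} [Semiring R]

theorem coeff_C_mul_X_mul_add_C_mul_geom_zero (a b : R) (p : R[X]) (m : ℕ) :
    (C a * X * p + C b * ∑ r ∈ Finset.range m, X ^ r).coeff 0 = if 0 < m then b else 0 := by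
  simp [mul_assoc]

theorem coeff_C_mul_X_mul_add_C_mul_geom_succ (a b : R) (p : R[X]) (m k : ℕ) :
    (C a * X * p + C b * ∑ r ∈ Finset.range m, X ^ r).coeff (k + 1) =
      a * p.coeff k + if k + 1 < m then b else 0 := by
  simp [mul_assoc]

variable [PartialOrder R] [IsOrderedRing R]

theorem coeff_C_mul_X_mul_add_C_mul_geom_le_succ {a b : R} {p : R[X]} {m k : ℕ}
    (ha : 0 ≤ a) (hp₀ : 0 ≤ p.coeff 0)
    (hp : ∀ j, j + 2 < m → p.coeff j ≤ p.coeff (j + 1)) (hk : k + 1 < m) :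
    (C a * X * p + C b * ∑ r ∈ Finset.range m, X ^ r).coeff k ≤
      (C a * X * p + C b * ∑ r ∈ Finset.range m, X ^ r).coeff (k + 1) := by
  rw [coeff_C_mul_X_mul_add_C_mul_geom_succ, if_pos hk]
  cases k with
  | zero =>
    rw [coeff_C_mul_X_mul_add_C_mul_geom_zero, if_pos (by omega)]
    exact le_add_of_nonneg_left (mul_nonneg ha hp₀)
  | succ j =>
    rw [coeff_C_mul_X_mul_add_C_mul_geom_succ, if_pos (by omega)]
    gcongr
    exact hp j (by omega)

end Polynomial

theorem S_coeffs_monotone_general (S : ℕ → Polynomial ℝ)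
    (hrec : ∀ n : ℕ, 3 ≤ n →
      S n = Polynomial.C ((n : ℝ) - 2) * Polynomial.X * S (n - 1) +
        Polynomial.C ((Nat.factorial (n - 3) : ℝ)) *
          ∑ r ∈ Finset.range (n - 2), Polynomial.X ^ r) :
    ∀ n : ℕ, 3 ≤ n → ∀ k : ℕ, k + 4 ≤ n →
      (S n).coeff k ≤ (S n).coeff (k + 1) := by
  have coeff_zero_nonneg : ∀ n, 3 ≤ n → 0 ≤ (S n).coeff 0 := by
    intro n hn
    rw [hrec n hn, coeff_C_mul_X_mul_add_C_mul_geom_zero]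
    split_ifs <;> positivity
  intro n hn
  induction n, hn using Nat.le_induction with
  | base => omega
  | succ n hn ih =>
    intro k hk
    rw [hrec (n + 1) (by omega), Nat.add_sub_cancel]
    refine coeff_C_mul_X_mul_add_C_mul_geom_le_succ ?_ (coeff_zero_nonneg n hn)
      (fun j hj => ih j (by omega)) (by omega)
    have : (3 : ℝ) ≤ n := by exact_mod_cast hn
    push_cast
    linarith

theorem S_coeffs_monotone (S : ℕ → Polynomial ℝ)
    (hinit : S 2 = 0)
    (hrec : ∀ n : ℕ, 3 ≤ n →
      S n = Polynomial.C ((n : ℝ) - 2) * Polynomial.X * S (n - 1) +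
        Polynomial.C ((Nat.factorial (n - 3) : ℝ)) *
          ∑ r ∈ Finset.range (n - 2), Polynomial.X ^ r) :
    ∀ n : ℕ, 3 ≤ n → ∀ k : ℕ, k + 4 ≤ n →
      (S n).coeff k ≤ (S n).coeff (k + 1) :=
  S_coeffs_monotone_general S hrec
end

section
/- Define a sequence of polynomials T_n(b) (with real coefficients) for integers n \ge 2 by T_2(b) = 0 and the recurrence T_n(b) = (n-2)(1+b) T_{n-1}(b) + (n-3)! \sum_{j=0}^{n-3} (1+b)^j for n \ge 3. Then for every integer n \ge 3 the polynomial T_n is unimodal: writing T_n(b) = \sum_{k=0}^{n-3} c_k b^k, there exists an index n^* with 0 \le n^* \le n-3 such that c_k \le c_{k+1} for all k < n^* and c_k \ge c_{k+1} for all k with n^* \le k \le n-4. -/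
/-!
Unfolding the recurrence writes `T n = ∑_{j < n-2} d_j (1 + b)^j` with weights `d_j ≥ 0`
nondecreasing in `j`, so the `k`-th coefficient is `∑ d_j C(j,k)` and the difference of
consecutive coefficients is `∑ d_j (C(j,k+1) - C(j,k))`. Past the middle every bracket is `≤ 0`.
Before the middle the brackets change sign once, from negative to positive, at `j = 2k+1`; since
`d` is nondecreasing the sum is at least `d_{2k+1}` times the sum of the brackets, which by the
hockey-stick identity is `C(n-2,k+2) - C(n-2,k+1) ≥ 0`.
-/

open Polynomial Finset
open scoped Nat

namespace Nat

theorem choose_le_choose_succ_of_two_mul_lt {N k : ℕ} (h : 2 * k < N) :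
    N.choose k ≤ N.choose (k + 1) := by
  refine Nat.le_of_mul_le_mul_right ?_ k.succ_pos
  rw [choose_succ_right_eq]
  exact Nat.mul_le_mul_left _ (by omega)

theorem choose_succ_le_choose_of_le_two_mul_add_one {N k : ℕ} (h : N ≤ 2 * k + 1) :
    N.choose (k + 1) ≤ N.choose k := by
  refine Nat.le_of_mul_le_mul_right ?_ k.succ_pos
  rw [choose_succ_right_eq]
  exact Nat.mul_le_mul_left _ (by omega)

theorem sum_range_choose_left (N k : ℕ) : ∑ j ∈ range N, j.choose k = N.choose (k + 1) := by
  induction N with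
  | zero => simp
  | succ N ih => rw [sum_range_succ, ih, choose_succ_succ' N k, add_comm]

end Nat

theorem Finset.mul_sum_le_sum_mul_of_sign_change {ι R : Type*} [LinearOrder ι] [CommRing R]
    [LinearOrder R] [IsStrictOrderedRing R] {s : Finset ι} {d f : ι → R} {r : ι}
    (hd : MonotoneOn d s) (hr : r ∈ s) (hf_neg : ∀ j ∈ s, j < r → f j ≤ 0)
    (hf_pos : ∀ j ∈ s, r ≤ j → 0 ≤ f j) :
    d r * ∑ j ∈ s, f j ≤ ∑ j ∈ s, d j * f j := by
  rw [mul_sum]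
  refine sum_le_sum fun j hj => ?_
  rcases lt_or_ge j r with h | h
  · exact mul_le_mul_of_nonpos_right (hd hj hr h.le) (hf_neg j hj h)
  · exact mul_le_mul_of_nonneg_right (hd hr hj h) (hf_pos j hj h)

section OnePlusXExpansion

variable {R : Type*} [CommRing R] (d : ℕ → R) (N : ℕ)

theorem coeff_succ_sub_coeff_sum_C_mul_one_add_X_pow (k : ℕ) :
    (∑ j ∈ range N, C (d j) * (1 + X) ^ j).coeff (k + 1) -
        (∑ j ∈ range N, C (d j) * (1 + X) ^ j).coeff k =
      ∑ j ∈ range N, d j * ((j.choose (k + 1) : R) - j.choose k) := by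
  simp only [finsetSum_coeff, coeff_C_mul, coeff_one_add_X_pow, ← sum_sub_distrib, mul_sub]

variable [LinearOrder R] [IsStrictOrderedRing R]

theorem coeff_le_coeff_succ_sum_C_mul_one_add_X_pow {k : ℕ} (hd : Monotone d)
    (hd0 : 0 ≤ d 0) (hk : 2 * k + 3 ≤ N) :
    (∑ j ∈ range N, C (d j) * (1 + X) ^ j).coeff k ≤
      (∑ j ∈ range N, C (d j) * (1 + X) ^ j).coeff (k + 1) := by
  rw [← sub_nonneg, coeff_succ_sub_coeff_sum_C_mul_one_add_X_pow]
  have hchoose_sum : ∑ j ∈ range N, ((j.choose (k + 1) : R) - j.choose k) =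
      N.choose (k + 2) - N.choose (k + 1) := by
    simp only [sum_sub_distrib, ← Nat.cast_sum, Nat.sum_range_choose_left]
  calc (0 : R)
      ≤ d (2 * k + 1) * (N.choose (k + 2) - N.choose (k + 1)) := by
        refine mul_nonneg (hd0.trans (hd (Nat.zero_le _))) (sub_nonneg.mpr ?_)
        exact_mod_cast Nat.choose_le_choose_succ_of_two_mul_lt (by omega)
    _ ≤ _ := by
        rw [← hchoose_sum]
        refine mul_sum_le_sum_mul_of_sign_change (hd.monotoneOn _) (mem_range.mpr (by omega))
          (fun j _ hj => sub_nonpos.mpr ?_) (fun j _ hj => sub_nonneg.mpr ?_)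
        · exact_mod_cast Nat.choose_succ_le_choose_of_le_two_mul_add_one (by omega)
        · exact_mod_cast Nat.choose_le_choose_succ_of_two_mul_lt (by omega)

theorem coeff_succ_le_coeff_sum_C_mul_one_add_X_pow {k : ℕ} (hd : ∀ j, 0 ≤ d j)
    (hk : N ≤ 2 * k + 2) :
    (∑ j ∈ range N, C (d j) * (1 + X) ^ j).coeff (k + 1) ≤
      (∑ j ∈ range N, C (d j) * (1 + X) ^ j).coeff k := by
  rw [← sub_nonpos, coeff_succ_sub_coeff_sum_C_mul_one_add_X_pow]
  refine sum_nonpos fun j hj => mul_nonpos_of_nonneg_of_nonpos (hd j) (sub_nonpos.mpr ?_)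
  exact_mod_cast Nat.choose_succ_le_choose_of_le_two_mul_add_one
    (by rw [mem_range] at hj; omega)

end OnePlusXExpansion

/-- `basisCoeff n j` is the coefficient of `(1 + X) ^ j` in `T n`; its recursion is read off from
that of `T`. -/
noncomputable def basisCoeff : ℕ → ℕ → ℝ
  | n, 0 => (n - 3)!
  | n, j + 1 => ((n : ℝ) - 2) * basisCoeff (n - 1) j + (n - 3)!

theorem basisCoeff_monotone {n : ℕ} (hn : 2 ≤ n) : Monotone (basisCoeff n) := by
  suffices h : ∀ j n, 2 ≤ n → basisCoeff n j ≤ basisCoeff n (j + 1) from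
    monotone_nat_of_le_succ fun j => h j n hn
  intro j
  induction j with
  | zero =>
    intro n hn
    have hn2 : (0 : ℝ) ≤ n - 2 := by rw [sub_nonneg]; exact_mod_cast hn
    simp only [basisCoeff]
    exact le_add_of_nonneg_left (mul_nonneg hn2 (Nat.cast_nonneg _))
  | succ j ih =>
    intro n hn
    simp only [basisCoeff]
    rcases hn.eq_or_lt with rfl | hn
    · simp
    · have hn2 : (0 : ℝ) ≤ n - 2 := by rw [sub_nonneg]; exact_mod_cast hn.le
      gcongr
      exact ih (n - 1) (by omega)

theorem eq_sum_basisCoeff_mul_one_add_X_pow (T : ℕ → ℝ[X]) (hinit : T 2 = 0)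
    (hrec : ∀ n : ℕ, 3 ≤ n →
      T n = C ((n : ℝ) - 2) * (1 + X) * T (n - 1) +
        C ((n - 3)! : ℝ) * ∑ j ∈ range (n - 2), (1 + X) ^ j)
    {n : ℕ} (hn : 2 ≤ n) :
    T n = ∑ j ∈ range (n - 2), C (basisCoeff n j) * (1 + X) ^ j := by
  induction n, hn using Nat.le_induction with
  | base => simpa using hinit
  | succ n hn ih =>
    obtain ⟨m, rfl⟩ : ∃ m, n = m + 2 := ⟨n - 2, by omega⟩
    have hsucc : ∀ j, basisCoeff (m + 3) (j + 1) =
        ((m + 3 : ℕ) - 2) * basisCoeff (m + 2) j + m ! := fun j => rfl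
    rw [hrec (m + 3) (by omega), show m + 3 - 1 = m + 2 from rfl, ih]
    simp only [show m + 3 - 2 = m + 1 from rfl, show m + 2 - 2 = m from rfl,
      show m + 3 - 3 = m from rfl, sum_range_succ' _ m, mul_add, mul_sum, ← add_assoc,
      ← sum_add_distrib]
    congr 1
    refine sum_congr rfl fun j _ => ?_
    rw [hsucc, map_add, map_mul]
    ring

theorem T_unimodal (T : ℕ → Polynomial ℝ)
    (hinit : T 2 = 0)
    (hrec : ∀ n : ℕ, 3 ≤ n →
      T n = Polynomial.C ((n : ℝ) - 2) * (1 + Polynomial.X) * T (n - 1) +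
        Polynomial.C ((Nat.factorial (n - 3) : ℝ)) *
          ∑ j ∈ Finset.range (n - 2), (1 + Polynomial.X) ^ j) :
    ∀ n : ℕ, 3 ≤ n →
      ∃ nstar : ℕ, nstar ≤ n - 3 ∧
        (∀ k : ℕ, k < nstar → (T n).coeff k ≤ (T n).coeff (k + 1)) ∧
        (∀ k : ℕ, nstar ≤ k → k + 4 ≤ n → (T n).coeff (k + 1) ≤ (T n).coeff k) := by
  intro n hn
  have hT := eq_sum_basisCoeff_mul_one_add_X_pow T hinit hrec (n := n) (by omega)
  have hmono := basisCoeff_monotone (n := n) (by omega)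
  have hnonneg : ∀ j, 0 ≤ basisCoeff n j := fun j =>
    (Nat.cast_nonneg _).trans (hmono (Nat.zero_le j))
  refine ⟨(n - 3) / 2, by omega, fun k hk => ?_, fun k hk _ => ?_⟩
  · rw [hT]
    exact coeff_le_coeff_succ_sum_C_mul_one_add_X_pow _ _ hmono (hnonneg 0) (by omega)
  · rw [hT]
    exact coeff_succ_le_coeff_sum_C_mul_one_add_X_pow _ _ hnonneg (by omega)
end
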